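/- arXiv:1612.09093 — 8 statements merged into one kernel-verified Lean document; each statement's English description precedes it below -/
import Mathlib

section
/- If A and B are distinct equivalence classes of ~0 and x ∈ A, y ∈ B satisfy x ~1 y, then x' ~1 y' for all x' ∈ A and y' ∈ B. -/
open SimpleGraph

/-- A leaf of a graph: a vertex with exactly one neighbor. -/
def TIsLeaf {V : Type*} (T : SimpleGraph V) (x : V) : Prop := ∃! y, T.Adj x y

/-- `Rel0 T ℓ x y`: every edge on the (unique) path from `x` to `y` is labeled `0`. -/
def Rel0 {V : Type*} (T : SimpleGraph V) (ℓ : Sym2 V → Bool) (x y : V) : Prop :=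
  ∃ p : T.Walk x y, p.IsPath ∧ ∀ e ∈ p.edges, ℓ e = false

/-- `Rel1 T ℓ x y`: exactly one edge on the (unique) path from `x` to `y` is labeled
`1` and all others `0`. -/
def Rel1 {V : Type*} (T : SimpleGraph V) (ℓ : Sym2 V → Bool) (x y : V) : Prop :=
  ∃ p : T.Walk x y, p.IsPath ∧ (p.edges.filter ℓ).length = 1

/-!
Concatenating the paths `x' ⟶ x`, `x ⟶ y`, `y ⟶ y'` gives a walk from `x'` to `y'` with a
single edge labelled `1`. Shortening it to a path cannot add `1`-edges, and cannot remove the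
last one either: otherwise `x' ~0 y'`, hence `x ~0 y` by transitivity.
-/

section Labels

variable {V : Type*} {T : SimpleGraph V} {ℓ : Sym2 V → Bool}

lemma rel0_of_walk {a b : V} (w : T.Walk a b) (hw : ∀ e ∈ w.edges, ℓ e = false) :
    Rel0 T ℓ a b := by
  classical
  exact ⟨w.bypass, w.bypass_isPath, fun e he => hw e (w.edges_bypass_subset_edges he)⟩

lemma Rel0.symm {a b : V} (h : Rel0 T ℓ a b) : Rel0 T ℓ b a := by
  obtain ⟨p, hp, hp0⟩ := h
  exact ⟨p.reverse, hp.reverse, by simpa using hp0⟩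

lemma Rel0.trans {a b c : V} (hab : Rel0 T ℓ a b) (hbc : Rel0 T ℓ b c) : Rel0 T ℓ a c := by
  obtain ⟨p, -, hp⟩ := hab
  obtain ⟨q, -, hq⟩ := hbc
  refine rel0_of_walk (p.append q) fun e he => ?_
  rcases List.mem_append.mp (Walk.edges_append p q ▸ he) with he | he
  exacts [hp e he, hq e he]

lemma length_filter_edges_bypass_le [DecidableEq V] {a b : V} (w : T.Walk a b) :
    (w.bypass.edges.filter ℓ).length ≤ (w.edges.filter ℓ).length := by
  have hsub : w.bypass.edges.filter ℓ ⊆ w.edges.filter ℓ := fun e he => by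
    rw [List.mem_filter] at he ⊢
    exact ⟨w.edges_bypass_subset_edges he.1, he.2⟩
  exact (List.subperm_of_subset (w.bypass_isPath.edges_nodup.filter ℓ) hsub).length_le

lemma rel1_of_walk_of_not_rel0 {a b : V} (w : T.Walk a b)
    (hw : (w.edges.filter ℓ).length ≤ 1) (h0 : ¬ Rel0 T ℓ a b) : Rel1 T ℓ a b := by
  classical
  refine ⟨w.bypass, w.bypass_isPath,
    le_antisymm ((length_filter_edges_bypass_le w).trans hw) ?_⟩
  rw [Nat.one_le_iff_ne_zero, Ne, List.length_eq_zero_iff, List.filter_eq_nil_iff]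
  exact fun h => h0 ⟨w.bypass, w.bypass_isPath, by simpa using h⟩

lemma filter_edges_eq_nil {a b : V} {w : T.Walk a b} (hw : ∀ e ∈ w.edges, ℓ e = false) :
    w.edges.filter ℓ = [] :=
  List.filter_eq_nil_iff.mpr fun e he => by simp [hw e he]

end Labels

theorem rel1_of_rel0_classes_general {V : Type*} (T : SimpleGraph V)
    (ℓ : Sym2 V → Bool) (x y x' y' : V)
    (hAB : ¬ Rel0 T ℓ x y) (h1 : Rel1 T ℓ x y)
    (hxx' : Rel0 T ℓ x x') (hyy' : Rel0 T ℓ y y') :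
    Rel1 T ℓ x' y' := by
  have hAB' : ¬ Rel0 T ℓ x' y' := fun h => hAB ((hxx'.trans h).trans hyy'.symm)
  obtain ⟨p, -, hp⟩ := h1
  obtain ⟨q, -, hq⟩ := hxx'.symm
  obtain ⟨r, -, hr⟩ := hyy'
  refine rel1_of_walk_of_not_rel0 (q.append (p.append r)) ?_ hAB'
  rw [Walk.edges_append, Walk.edges_append, List.filter_append, List.filter_append,
    filter_edges_eq_nil hq, filter_edges_eq_nil hr]
  simp [hp]

/-- If `A` and `B` are distinct `~0`-classes (i.e. `¬ x ~0 y`), `x ∈ A`, `y ∈ B` and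
`x ~1 y`, then `x' ~1 y'` for all `x' ∈ A` (i.e. `x ~0 x'`) and `y' ∈ B`
(i.e. `y ~0 y'`). -/
theorem rel1_of_rel0_classes {V : Type*} (T : SimpleGraph V) (hT : T.IsTree)
    (ℓ : Sym2 V → Bool) (x y x' y' : V)
    (hx : TIsLeaf T x) (hy : TIsLeaf T y) (hx' : TIsLeaf T x') (hy' : TIsLeaf T y')
    (hAB : ¬ Rel0 T ℓ x y) (h1 : Rel1 T ℓ x y)
    (hxx' : Rel0 T ℓ x x') (hyy' : Rel0 T ℓ y y') :
    Rel1 T ℓ x' y' :=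
  rel1_of_rel0_classes_general T ℓ x y x' y' hAB h1 hxx' hyy'
end

section
/- If x ~1 y and x ~1 z with y ≠ z, then y ~1 z does not hold. -/
open SimpleGraph

/-!
Count the labels mod 2. In an acyclic graph, the paths from a base vertex `x` to two adjacent
vertices differ by exactly the edge between them, so along any walk from `a` to `b` the parity
telescopes to `π a + π b`, where `π v` is the parity of the path from `x` to `v`. With `x` as
base, the path from `y` to `z` therefore has parity `1 + 1 = 0`, so it cannot carry exactly one
label `1`.
-/

namespace SimpleGraph

variable {V : Type*} {G : SimpleGraph V} (ℓ : Sym2 V → Bool)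

namespace Walk

def labelParity {u v : V} (p : G.Walk u v) : ZMod 2 := (p.edges.filter ℓ).length

@[simp]
lemma labelParity_nil {u : V} : (nil : G.Walk u u).labelParity ℓ = 0 := rfl

@[simp]
lemma labelParity_cons {u v w : V} (h : G.Adj u v) (p : G.Walk v w) :
    (cons h p).labelParity ℓ = (if ℓ s(u, v) then 1 else 0) + p.labelParity ℓ := by
  unfold labelParity
  cases hl : ℓ s(u, v) <;> simp [hl, add_comm]

lemma labelParity_concat {u v w : V} (p : G.Walk u v) (h : G.Adj v w) :
    (p.concat h).labelParity ℓ = p.labelParity ℓ + (if ℓ s(v, w) then 1 else 0) := by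
  unfold labelParity
  cases hl : ℓ s(v, w) <;> simp [edges_concat, hl]

end Walk

variable {ℓ}

lemma IsAcyclic.eq_concat_or_eq_concat_of_adj (hG : G.IsAcyclic) {x a b : V}
    {p : G.Walk x a} {q : G.Walk x b} (hp : p.IsPath) (hq : q.IsPath) (h : G.Adj a b) :
    q = p.concat h ∨ p = q.concat h.symm := by
  by_cases ha : a ∈ q.support
  · exact .inl (hG.path_concat hp hq h ha)
  · exact .inr (hG.path_concat hq hp h.symm
      (hG.mem_support_of_ne_mem_support_of_adj_of_isPath hp hq h ha))

lemma IsAcyclic.labelParity_eq_add_of_adj (hG : G.IsAcyclic) {x a b : V}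
    {p : G.Walk x a} {q : G.Walk x b} (hp : p.IsPath) (hq : q.IsPath) (h : G.Adj a b) :
    q.labelParity ℓ = p.labelParity ℓ + (if ℓ s(a, b) then 1 else 0) := by
  rcases hG.eq_concat_or_eq_concat_of_adj hp hq h with rfl | rfl
  · exact Walk.labelParity_concat ℓ p h
  · rw [Walk.labelParity_concat, Sym2.eq_swap]
    grind [CharTwo.add_self_eq_zero]

theorem IsAcyclic.labelParity_eq_add (hG : G.IsAcyclic) {x a b : V}
    {p : G.Walk x a} {q : G.Walk x b} (hp : p.IsPath) (hq : q.IsPath) (w : G.Walk a b) :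
    w.labelParity ℓ = p.labelParity ℓ + q.labelParity ℓ := by
  classical
  induction w with
  | nil =>
    obtain rfl : p = q := Subtype.mk.inj ((hG.subsingleton_path _ _).elim ⟨p, hp⟩ ⟨q, hq⟩)
    simp [CharTwo.add_self_eq_zero]
  | cons h w ih =>
    have hr := (p.concat h).bypass_isPath
    rw [Walk.labelParity_cons, ih hr hq, hG.labelParity_eq_add_of_adj hp hr h]
    grind [CharTwo.add_self_eq_zero]

end SimpleGraph

theorem not_rel1_of_rel1_rel1_general {V : Type*} (T : SimpleGraph V) (hT : T.IsTree)
    (ℓ : Sym2 V → Bool) (x y z : V)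
    (h1 : Rel1 T ℓ x y) (h2 : Rel1 T ℓ x z) :
    ¬ Rel1 T ℓ y z := by
  rintro ⟨r, -, hr⟩
  obtain ⟨p, hp, hp1⟩ := h1
  obtain ⟨q, hq, hq1⟩ := h2
  have := hT.isAcyclic.labelParity_eq_add (ℓ := ℓ) hp hq r
  simp only [Walk.labelParity, hp1, hq1, hr, Nat.cast_one] at this
  exact absurd this (by decide)

/-- If `x ~1 y` and `x ~1 z` with `y ≠ z`, then `y ~1 z` does not hold. -/
theorem not_rel1_of_rel1_rel1 {V : Type*} (T : SimpleGraph V) (hT : T.IsTree)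
    (ℓ : Sym2 V → Bool) (x y z : V)
    (hx : TIsLeaf T x) (hy : TIsLeaf T y) (hz : TIsLeaf T z)
    (hyz : y ≠ z) (h1 : Rel1 T ℓ x y) (h2 : Rel1 T ℓ x z) :
    ¬ Rel1 T ℓ y z :=
  not_rel1_of_rel1_rel1_general T hT ℓ x y z h1 h2
end

section
/- The graph G on the set of ~0-equivalence classes, with an edge between classes c_i ≠ c_j whenever some x ∈ c_i and y ∈ c_j satisfy x ~1 y, is a forest (contains no cycles). -/
/-!
Contracting every `0`-labelled edge of the tree `T` yields a forest, whose vertices are the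
components of the `0`-labelled subforest and whose edges come from `1`-labelled edges of `T`:
a cycle there would lift to a walk in `T` joining the ends of an edge without using it.
Two leaves are `~0`-related iff they lie in the same component, and `~1`-related leaves lie
in components joined by the unique `1`-edge of their path, so `G(~1)/~0` is isomorphic to a
subgraph of the contracted forest.
-/

open SimpleGraph

namespace SimpleGraph

variable {V : Type*} {G H : SimpleGraph V}

/-- The graph obtained from `G` by contracting each connected component of `H` to a vertex. -/
def contract (G H : SimpleGraph V) : SimpleGraph H.ConnectedComponent :=
  fromRel fun C D => ∃ u v, G.Adj u v ∧ H.connectedComponentMk u = C ∧ H.connectedComponentMk v = D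

lemma contract_adj {C D : H.ConnectedComponent} :
    (G.contract H).Adj C D ↔
      C ≠ D ∧ ∃ u v, G.Adj u v ∧ H.connectedComponentMk u = C ∧ H.connectedComponentMk v = D := by
  rw [contract, fromRel_adj, or_iff_left_of_imp]
  rintro ⟨u, v, huv, rfl, rfl⟩
  exact ⟨v, u, huv.symm, rfl, rfl⟩

lemma Reachable.of_contract (hH : H ≤ G) {C D : H.ConnectedComponent}
    (h : (G.contract H).Reachable C D) {x y : V} (hx : H.connectedComponentMk x = C)
    (hy : H.connectedComponentMk y = D) : G.Reachable x y := by
  obtain ⟨p⟩ := h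
  induction p generalizing x with
  | nil => exact (ConnectedComponent.exact (hx.trans hy.symm)).mono hH
  | cons hadj _ ih =>
    obtain ⟨-, u, v, huv, hu, rfl⟩ := contract_adj.mp hadj
    exact ((ConnectedComponent.exact (hx.trans hu.symm)).mono hH).trans
      (huv.reachable.trans (ih rfl hy))

lemma contract_deleteEdges_le {u v : V} :
    (G.contract H).deleteEdges {s(H.connectedComponentMk u, H.connectedComponentMk v)} ≤
      (G.deleteEdges {s(u, v)}).contract H := by
  intro C D hCD
  rw [deleteEdges_adj, contract_adj] at hCD
  obtain ⟨⟨hne, a, b, hab, rfl, rfl⟩, hnot⟩ := hCD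
  refine contract_adj.mpr ⟨hne, a, b, ?_, rfl, rfl⟩
  rw [deleteEdges_adj, Set.mem_singleton_iff]
  exact ⟨hab, fun h => hnot (by simpa using congrArg (Sym2.map H.connectedComponentMk) h)⟩

theorem IsAcyclic.contract (hG : G.IsAcyclic) (hH : H ≤ G) : (G.contract H).IsAcyclic := by
  rw [isAcyclic_iff_forall_adj_isBridge]
  intro C D hCD
  obtain ⟨hne, u, v, huv, rfl, rfl⟩ := contract_adj.mp hCD
  have hH' : H ≤ G.deleteEdges {s(u, v)} := by
    intro a b hab
    refine deleteEdges_adj.mpr ⟨hH hab, fun h => hne ?_⟩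
    rcases Sym2.eq_iff.mp (Set.mem_singleton_iff.mp h) with ⟨rfl, rfl⟩ | ⟨rfl, rfl⟩
    · exact ConnectedComponent.connectedComponentMk_eq_of_adj hab
    · exact (ConnectedComponent.connectedComponentMk_eq_of_adj hab).symm
  rw [isBridge_iff]
  intro hreach
  exact isBridge_iff.mp (isAcyclic_iff_forall_adj_isBridge.mp hG huv)
    (Reachable.of_contract hH' (hreach.mono contract_deleteEdges_le) rfl rfl)

end SimpleGraph

section Labelling

variable {V : Type*} {T : SimpleGraph V} {ℓ : Sym2 V → Bool}

def zeroSubgraph (T : SimpleGraph V) (ℓ : Sym2 V → Bool) : SimpleGraph V :=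
  T.deleteEdges {e | ℓ e = true}

lemma reachable_zeroSubgraph_of_walk {x y : V} (p : T.Walk x y)
    (hp : ∀ e ∈ p.edges, ℓ e = false) : (zeroSubgraph T ℓ).Reachable x y :=
  ⟨p.transfer _ fun e he => by
    rw [zeroSubgraph, edgeSet_deleteEdges]
    exact ⟨p.edges_subset_edgeSet he, by simp [hp e he]⟩⟩

lemma rel0_iff_reachable_zeroSubgraph {x y : V} :
    Rel0 T ℓ x y ↔ (zeroSubgraph T ℓ).Reachable x y := by
  classical
  constructor
  · rintro ⟨p, -, hp⟩
    exact reachable_zeroSubgraph_of_walk p hp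
  · rintro ⟨p⟩
    let q : T.Walk x y := p.mapLe (deleteEdges_le _)
    refine ⟨q.bypass, q.bypass_isPath, fun e he => ?_⟩
    have hq : q.edges = p.edges := p.edges_mapLe_eq_edges _
    have he' := p.edges_subset_edgeSet (hq ▸ q.edges_bypass_subset_edges he)
    rw [zeroSubgraph, edgeSet_deleteEdges] at he'
    simpa using he'.2

lemma exists_adj_of_walk_of_count_eq_one {x y : V} (p : T.Walk x y)
    (hp : (p.edges.filter ℓ).length = 1) :
    ∃ u v, T.Adj u v ∧ (zeroSubgraph T ℓ).Reachable x u ∧ (zeroSubgraph T ℓ).Reachable v y := by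
  induction p with
  | nil => simp at hp
  | @cons a b _ hab q ih =>
    rw [Walk.edges_cons, List.filter_cons] at hp
    by_cases hℓ : ℓ s(a, b) = true
    · simp only [hℓ, if_true, List.length_cons, add_eq_right, List.length_eq_zero_iff,
        List.filter_eq_nil_iff, Bool.not_eq_true] at hp
      exact ⟨a, b, hab, .rfl, reachable_zeroSubgraph_of_walk q hp⟩
    · simp only [hℓ, Bool.false_eq_true, if_false] at hp
      obtain ⟨u, v, huv, hbu, hvy⟩ := ih hp
      have hab0 : (zeroSubgraph T ℓ).Adj a b := by simpa [zeroSubgraph, hab] using hℓ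
      exact ⟨u, v, huv, hab0.reachable.trans hbu, hvy⟩

lemma Rel1.exists_adj {x y : V} (h : Rel1 T ℓ x y) :
    ∃ u v, T.Adj u v ∧ (zeroSubgraph T ℓ).Reachable x u ∧ (zeroSubgraph T ℓ).Reachable v y :=
  let ⟨p, _, hp⟩ := h
  exists_adj_of_walk_of_count_eq_one p hp

end Labelling

/-- The quotient graph `G(~1)/~0`, whose vertices are the `~0`-equivalence classes of
leaves and whose edges join distinct classes containing a `~1`-related pair, is a
forest (it contains no cycles). -/
theorem quotient_graph_isAcyclic {V : Type*} (T : SimpleGraph V) (hT : T.IsTree)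
    (ℓ : Sym2 V → Bool)
    (hEq : Equivalence (fun x y : {v : V // TIsLeaf T v} => Rel0 T ℓ x.1 y.1)) :
    (SimpleGraph.fromRel
      (fun a b : Quotient (Setoid.mk (fun x y : {v : V // TIsLeaf T v} =>
          Rel0 T ℓ x.1 y.1) hEq) =>
        ∃ x y : {v : V // TIsLeaf T v},
          Quotient.mk _ x = a ∧ Quotient.mk _ y = b ∧ Rel1 T ℓ x.1 y.1)).IsAcyclic := by
  let T₀ := zeroSubgraph T ℓ
  let φ : Quotient (Setoid.mk _ hEq) → T₀.ConnectedComponent :=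
    Quotient.lift (fun x => T₀.connectedComponentMk x.1) fun _ _ h =>
      ConnectedComponent.sound (rel0_iff_reachable_zeroSubgraph.mp h)
  have hφ : Function.Injective φ := by
    rintro ⟨x⟩ ⟨y⟩ h
    exact Quotient.sound (rel0_iff_reachable_zeroSubgraph.mpr (ConnectedComponent.exact h))
  refine IsAcyclic.comap ⟨φ, fun {a b} hab => ?_⟩ hφ (hT.isAcyclic.contract (deleteEdges_le _))
  rw [fromRel_adj] at hab
  refine contract_adj.mpr ⟨hφ.ne hab.1, ?_⟩
  rcases hab.2 with ⟨x, y, rfl, rfl, hxy⟩ | ⟨x, y, rfl, rfl, hxy⟩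
  · obtain ⟨u, v, huv, hxu, hvy⟩ := hxy.exists_adj
    exact ⟨u, v, huv, (ConnectedComponent.sound hxu).symm, ConnectedComponent.sound hvy⟩
  · obtain ⟨u, v, huv, hxu, hvy⟩ := hxy.exists_adj
    exact ⟨v, u, huv.symm, ConnectedComponent.sound hvy, (ConnectedComponent.sound hxu).symm⟩
end

section
/- Let (T, λ) be a least resolved tree explaining a connected single-1-relation graph with discrete ~0. Then every edge labeled 0 is incident to a leaf, and every inner vertex of T is incident to exactly one edge labeled 0. -/
/-!
Contracting an interior edge `uv` of `T` (merging `v` into `u`, every edge keeping the label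
of its preimage) gives again a tree, and it maps the path between two leaves onto the path
between them in the contracted tree with the same `1`-edges, unless `uv` is one of them. So
the contraction still explains `G` as soon as `uv` is labelled `0` or lies on no path between
leaves; least resolvedness excludes both when `u` and `v` are inner vertices.

Hence no `0`-edge joins two inner vertices. Two `0`-edges at an inner vertex `w` would then
end in two leaves joined by an all-`0` path, against discreteness of `~0`. If all edges at `w`
were labelled `1`, a path through `w` would carry two `1`-edges, so no edge of `G` crosses `w`;
as `G` is connected, no path between leaves meets `w`, and the edge from `w` to an inner
neighbour (two leaf neighbours would be separated by `w`) could be contracted.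
-/

open SimpleGraph

namespace SimpleGraph

variable {V W : Type*} {G : SimpleGraph V}

theorem IsAcyclic.mem_edges_of_adj (hG : G.IsAcyclic) {a b : V} (hab : G.Adj a b)
    (p : G.Walk a b) : s(a, b) ∈ p.edges :=
  isBridge_iff_forall_walk_mem_edges.mp (isAcyclic_iff_forall_adj_isBridge.mp hG hab) p

theorem IsAcyclic.mem_edges_of_mem_support (hG : G.IsAcyclic) {x y a b : V} {p : G.Walk x y}
    (hab : G.Adj a b) (ha : a ∈ p.support) (hb : b ∈ p.support) : s(a, b) ∈ p.edges := by
  classical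
  have := hG.mem_edges_of_adj hab ((p.takeUntil a ha).reverse.append (p.takeUntil b hb))
  rw [Walk.edges_append, Walk.edges_reverse, List.mem_append, List.mem_reverse] at this
  exact this.elim (fun h => p.edges_takeUntil_subset_edges ha h)
    (fun h => p.edges_takeUntil_subset_edges hb h)

theorem IsAcyclic.rel1_iff {x y : V} (hG : G.IsAcyclic) (ℓ : Sym2 V → Bool) {p : G.Walk x y}
    (hp : p.IsPath) : Rel1 G ℓ x y ↔ (p.edges.filter ℓ).length = 1 :=
  ⟨fun ⟨q, hq, h⟩ => by
    obtain rfl : q = p :=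
      congrArg Subtype.val ((hG.subsingleton_path x y).elim ⟨q, hq⟩ ⟨p, hp⟩)
    exact h, fun h => ⟨p, hp, h⟩⟩

namespace Walk

section Collapse

variable [DecidableEq W] (f : V → W)

def collapse : ∀ {x y : V}, G.Walk x y → (G.map f).Walk (f x) (f y)
  | _, _, nil => nil
  | x, _, cons (v := b) h p =>
    if hxb : f x = f b then (p.collapse).copy hxb.symm rfl
    else cons (map_adj_apply' h hxb) p.collapse

variable {f}

theorem support_collapse_subset {x y : V} (p : G.Walk x y) :
    (p.collapse f).support ⊆ p.support.map f := by
  induction p with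
  | nil => simp [collapse]
  | @cons a b _ h p ih =>
    unfold collapse
    split_ifs with hab
    · simpa using List.Subset.trans ih (List.subset_cons_self (f a) _)
    · simpa using List.cons_subset_cons _ ih

theorem length_filter_edges_collapse {x y : V} (p : G.Walk x y) {ℓ : Sym2 V → Bool}
    {ℓ' : Sym2 W → Bool} (hdiag : ∀ e ∈ p.edges, (e.map f).IsDiag → ℓ e = false)
    (hℓ : ∀ e ∈ p.edges, ¬ (e.map f).IsDiag → ℓ' (e.map f) = ℓ e) :
    ((p.collapse f).edges.filter ℓ').length = (p.edges.filter ℓ).length := by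
  induction p with
  | nil => simp [collapse]
  | @cons a b _ h p ih =>
    simp only [edges_cons, List.forall_mem_cons] at hdiag hℓ
    unfold collapse
    split_ifs with hab
    · simp [ih hdiag.2 hℓ.2, hdiag.1 (by simpa using hab)]
    · have hlab := hℓ.1 (by simpa using hab)
      rw [Sym2.map_mk] at hlab
      simp only [edges_cons, List.filter_cons, hlab]
      split <;> simp [ih hdiag.2 hℓ.2]

theorem IsPath.collapse {x y : V} {p : G.Walk x y} (hp : p.IsPath)
    (hf : ∀ a ∈ p.support, ∀ b ∈ p.support, f a = f b → a = b ∨ s(a, b) ∈ p.edges) :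
    (p.collapse f).IsPath := by
  induction p with
  | nil => simp [Walk.collapse]
  | @cons a b _ h p ih =>
    rw [cons_isPath_iff] at hp
    have hf' : ∀ c ∈ p.support, ∀ d ∈ p.support, f c = f d →
        c = d ∨ s(c, d) ∈ p.edges := by
      intro c hc d hd hcd
      rcases hf c (by simp [hc]) d (by simp [hd]) hcd with h' | h'
      · exact .inl h'
      · rw [edges_cons, List.mem_cons] at h'
        rcases h' with h' | h'
        · rcases Sym2.eq_iff.mp h' with ⟨rfl, -⟩ | ⟨-, rfl⟩
          exacts [(hp.2 hc).elim, (hp.2 hd).elim]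
        · exact .inr h'
    unfold Walk.collapse
    split_ifs with hab
    · simpa using ih hp.1 hf'
    · refine (ih hp.1 hf').cons fun ha => ?_
      obtain ⟨c, hc, hac⟩ := List.mem_map.mp (support_collapse_subset p ha)
      rcases hf a (by simp) c (by simp [hc]) hac.symm with rfl | h'
      · exact hp.2 hc
      · rw [edges_cons, List.mem_cons] at h'
        rcases h' with h' | h'
        · rcases Sym2.eq_iff.mp h' with ⟨-, rfl⟩ | ⟨-, rfl⟩
          exacts [hab hac.symm, hp.2 hc]
        · exact hp.2 (p.fst_mem_support_of_mem_edges h')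

end Collapse

theorem exists_lift_of_map {f : V → W}
    (hfib : ∀ z z', f z = f z' → ∃ r : G.Walk z z', ∀ e ∈ r.edges, (e.map f).IsDiag)
    {a b : W} (q : (G.map f).Walk a b) {a₀ b₀ : V} (ha : f a₀ = a) (hb : f b₀ = b) :
    ∃ r : G.Walk a₀ b₀, ∀ e ∈ r.edges, (e.map f).IsDiag ∨ e.map f ∈ q.edges := by
  induction q generalizing a₀ with
  | nil =>
    obtain ⟨r, hr⟩ := hfib a₀ b₀ (ha.trans hb.symm)
    exact ⟨r, fun e he => .inl (hr e he)⟩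
  | cons h q ih =>
    obtain ⟨-, a₁, c₁, h₁, ha₁, hc₁⟩ := (map_adj' f G _ _).mp h
    obtain ⟨r₀, hr₀⟩ := hfib a₀ a₁ (ha.trans ha₁.symm)
    obtain ⟨r₁, hr₁⟩ := ih hc₁ hb
    refine ⟨r₀.append (cons h₁ r₁), fun e he => ?_⟩
    simp only [edges_append, edges_cons, List.mem_append, List.mem_cons] at he
    rcases he with he | rfl | he
    · exact .inl (hr₀ e he)
    · exact .inr (by rw [edges_cons, Sym2.map_mk, ha₁, hc₁]; exact List.mem_cons_self)
    · exact (hr₁ e he).imp_right (List.mem_cons_of_mem _)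

end Walk

-- Lifting a walk of `G.map f` through the fibres shows that every edge of `G.map f` is a bridge.
theorem IsAcyclic.map {f : V → W} (hG : G.IsAcyclic)
    (hfib : ∀ z z', f z = f z' → ∃ r : G.Walk z z', ∀ e ∈ r.edges, (e.map f).IsDiag) :
    (G.map f).IsAcyclic := by
  refine isAcyclic_iff_forall_adj_isBridge.mpr fun a b hab =>
    isBridge_iff_forall_walk_mem_edges.mpr fun q => ?_
  obtain ⟨hne, a₀, b₀, h₀, rfl, rfl⟩ := (map_adj' f G _ _).mp hab
  obtain ⟨r, hr⟩ := q.exists_lift_of_map hfib rfl rfl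
  simpa [hne] using hr _ (hG.mem_edges_of_adj h₀ r)

theorem IsAcyclic.not_adj_of_adj_of_adj (hG : G.IsAcyclic) {a b c : V}
    (hab : G.Adj a b) (hac : G.Adj a c) : ¬ G.Adj b c := fun hbc => by
  classical
  exact hG.cliqueFree le_rfl {a, b, c} (is3Clique_triple_iff.mpr ⟨hab, hac, hbc⟩)

section Contraction

variable [DecidableEq V] {T : SimpleGraph V} {u v : V}

/-- The contraction of the edge `uv` of `T` is `T.map (contractMap huv)`. -/
def contractMap (huv : u ≠ v) (z : V) : {w : V // w ≠ v} :=
  if h : z = v then ⟨u, huv⟩ else ⟨z, h⟩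

theorem contractMap_of_ne (huv : u ≠ v) {z : V} (hz : z ≠ v) :
    contractMap huv z = ⟨z, hz⟩ :=
  dif_neg hz

theorem contractMap_val (huv : u ≠ v) (a : {w : V // w ≠ v}) : contractMap huv a.1 = a :=
  contractMap_of_ne huv a.2

theorem contractMap_self (huv : u ≠ v) : contractMap huv v = ⟨u, huv⟩ :=
  dif_pos rfl

theorem contractMap_eq_contractMap_iff (huv : u ≠ v) {a b : V} :
    contractMap huv a = contractMap huv b ↔ a = b ∨ s(a, b) = s(u, v) := by
  unfold contractMap
  split_ifs <;> simp <;> grind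

theorem contractMap_eq_iff (huv : u ≠ v) {z : V} {a : {w : V // w ≠ v}} :
    contractMap huv z = a ↔ z = a.1 ∨ z = v ∧ a.1 = u := by
  unfold contractMap
  split_ifs <;> simp [Subtype.ext_iff] <;> grind

theorem map_contractMap_adj_iff (huv : u ≠ v) (a b : {w : V // w ≠ v}) :
    (T.map (contractMap huv)).Adj a b ↔ T.Adj a.1 b.1 ∨
      (a.1 = u ∧ T.Adj v b.1 ∧ b.1 ≠ u) ∨ (b.1 = u ∧ T.Adj v a.1 ∧ a.1 ≠ u) := by
  simp only [map_adj', contractMap_eq_iff]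
  grind [Subtype.ext_iff, SimpleGraph.adj_comm, SimpleGraph.irrefl]

theorem exists_walk_of_contractMap_eq (huv : T.Adj u v) {z z' : V}
    (h : contractMap huv.ne z = contractMap huv.ne z') :
    ∃ r : T.Walk z z', ∀ e ∈ r.edges, (e.map (contractMap huv.ne)).IsDiag := by
  rcases (contractMap_eq_contractMap_iff huv.ne).mp h with rfl | he
  · exact ⟨.nil, by simp⟩
  · have hzz' : T.Adj z z' := T.mem_edgeSet.mp (he ▸ huv)
    exact ⟨.cons hzz' .nil, by simpa using h⟩

theorem IsAcyclic.map_contractMap (hT : T.IsAcyclic) (huv : T.Adj u v) :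
    (T.map (contractMap huv.ne)).IsAcyclic :=
  hT.map fun _ _ => exists_walk_of_contractMap_eq huv

theorem isDiag_map_contractMap_iff (huv : u ≠ v) {e : Sym2 V} (he : e ∈ T.edgeSet) :
    (e.map (contractMap huv)).IsDiag ↔ e = s(u, v) := by
  induction e using Sym2.ind with
  | _ a b => simp [contractMap_eq_contractMap_iff, (T.mem_edgeSet.mp he).ne]

theorem injective_map_contractMap (hT : T.IsAcyclic) (huv : T.Adj u v) :
    Function.Injective fun e : T.edgeSet => e.1.map (contractMap huv.ne) := by
  suffices key : ∀ a b c d : V, T.Adj a b → T.Adj c d →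
      contractMap huv.ne a = contractMap huv.ne c →
      contractMap huv.ne b = contractMap huv.ne d → s(a, b) = s(c, d) by
    rintro ⟨e₁, he₁⟩ ⟨e₂, he₂⟩ h
    induction e₁ using Sym2.ind with | _ a b => ?_
    induction e₂ using Sym2.ind with | _ c d => ?_
    rw [mem_edgeSet] at he₁ he₂
    refine Subtype.ext ?_
    rcases Sym2.eq_iff.mp (by simpa using h) with ⟨hac, hbd⟩ | ⟨had, hbc⟩
    · exact key a b c d he₁ he₂ hac hbd
    · exact (key a b d c he₁ he₂.symm had hbc).trans Sym2.eq_swap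
  have adj_of_eq {x y : V} (h : s(x, y) = s(u, v)) : T.Adj x y := by
    rwa [← mem_edgeSet, h]
  intro a b c d hab hcd hac hbd
  rw [contractMap_eq_contractMap_iff] at hac hbd
  rcases hac with rfl | hac <;> rcases hbd with rfl | hbd
  · rfl
  · exact (hT.not_adj_of_adj_of_adj hab hcd (adj_of_eq hbd)).elim
  · exact (hT.not_adj_of_adj_of_adj hab.symm hcd.symm (adj_of_eq hac)).elim
  · grind [Sym2.eq_iff, hab.ne, hcd.ne]

variable (T) in
/-- Each edge of the contraction carries the label of its unique preimage in `T`. -/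
noncomputable def contractLabel (ℓ : Sym2 V → Bool) (huv : u ≠ v) :
    Sym2 {w : V // w ≠ v} → Bool :=
  Function.extend (fun e : T.edgeSet => e.1.map (contractMap huv)) (fun e => ℓ e.1) fun _ => false

theorem contractLabel_map (hT : T.IsAcyclic) (huv : T.Adj u v) (ℓ : Sym2 V → Bool)
    {e : Sym2 V} (he : e ∈ T.edgeSet) :
    contractLabel T ℓ huv.ne (e.map (contractMap huv.ne)) = ℓ e :=
  (injective_map_contractMap hT huv).extend_apply _ _ ⟨e, he⟩

theorem contractLabel_of_adj (hT : T.IsAcyclic) (huv : T.Adj u v) (ℓ : Sym2 V → Bool)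
    {a b : {w : V // w ≠ v}} (h : T.Adj a.1 b.1) :
    contractLabel T ℓ huv.ne s(a, b) = ℓ s(a.1, b.1) := by
  simpa [contractMap_val] using contractLabel_map hT huv ℓ (T.mem_edgeSet.mpr h)

theorem contractLabel_of_eq_of_adj (hT : T.IsAcyclic) (huv : T.Adj u v) (ℓ : Sym2 V → Bool)
    {a b : {w : V // w ≠ v}} (ha : a.1 = u) (h : T.Adj v b.1) :
    contractLabel T ℓ huv.ne s(a, b) = ℓ s(v, b.1) := by
  have hva : contractMap huv.ne v = a := (contractMap_self huv.ne).trans (Subtype.ext ha.symm)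
  simpa [contractMap_val, hva] using contractLabel_map hT huv ℓ (T.mem_edgeSet.mpr h)

theorem rel1_map_contractMap_iff (hT : T.IsAcyclic) (huv : T.Adj u v) (ℓ : Sym2 V → Bool)
    {x y : V} (hx : x ≠ v) (hy : y ≠ v) {p : T.Walk x y} (hp : p.IsPath)
    (hℓ : ℓ s(u, v) = false ∨ s(u, v) ∉ p.edges) :
    Rel1 (T.map (contractMap huv.ne)) (contractLabel T ℓ huv.ne) ⟨x, hx⟩ ⟨y, hy⟩ ↔
      Rel1 T ℓ x y := by
  rw [hT.rel1_iff ℓ hp, ← contractMap_of_ne huv.ne hx, ← contractMap_of_ne huv.ne hy,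
    (hT.map_contractMap huv).rel1_iff _ (hp.collapse ?_)]
  · rw [p.length_filter_edges_collapse (fun e he hdiag => ?_)
      fun e he _ => contractLabel_map hT huv ℓ (p.edges_subset_edgeSet he)]
    rw [isDiag_map_contractMap_iff huv.ne (p.edges_subset_edgeSet he)] at hdiag
    subst hdiag
    exact hℓ.resolve_right (not_not.mpr he)
  · intro a ha b hb hab
    refine ((contractMap_eq_contractMap_iff huv.ne).mp hab).imp_right fun h => ?_
    exact hT.mem_edges_of_mem_support (by rwa [← mem_edgeSet, h]) ha hb

end Contraction

theorem Walk.one_le_length_filter_edges {ℓ : Sym2 V → Bool} {w y : V}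
    (hw : ∀ a, G.Adj w a → ℓ s(w, a) = true) (p : G.Walk w y) (hne : w ≠ y) :
    1 ≤ (p.edges.filter ℓ).length := by
  cases p with
  | nil => exact absurd rfl hne
  | cons h q => simp [hw _ h]

theorem Walk.notMem_support_of_length_filter_edges_eq_one {ℓ : Sym2 V → Bool} {w x y : V}
    (hw : ∀ a, G.Adj w a → ℓ s(w, a) = true) (hx : x ≠ w) (hy : y ≠ w) (p : G.Walk x y)
    (hp : (p.edges.filter ℓ).length = 1) : w ∉ p.support := by
  classical
  intro hmem
  have h₁ := (p.takeUntil w hmem).reverse.one_le_length_filter_edges hw hx.symm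
  have h₂ := (p.dropUntil w hmem).one_le_length_filter_edges hw hy.symm
  have hsplit := congrArg (fun q : G.Walk x y => (q.edges.filter ℓ).length) (p.take_spec hmem)
  simp only [edges_append, edges_reverse, List.filter_append, List.filter_reverse,
    List.length_append, List.length_reverse] at h₁ hsplit
  omega

theorem Reachable.exists_walk_notMem_support {X : Type*} {H : SimpleGraph X} {ι : X → V} {w : V}
    (hι : ∀ x, ι x ≠ w)
    (hadj : ∀ x y, H.Adj x y → ∃ p : G.Walk (ι x) (ι y), w ∉ p.support)
    {x y : X} (h : H.Reachable x y) : ∃ p : G.Walk (ι x) (ι y), w ∉ p.support := by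
  obtain ⟨q⟩ := h
  induction q with
  | nil => exact ⟨.nil, by simpa using (hι _).symm⟩
  | cons h _ ih =>
    obtain ⟨p₁, hp₁⟩ := hadj _ _ h
    obtain ⟨p₂, hp₂⟩ := ih
    exact ⟨p₁.append p₂, by simp [Walk.mem_support_append_iff, hp₁, hp₂]⟩

end SimpleGraph

section Leaves

variable {V : Type*} {T : SimpleGraph V}

theorem TIsLeaf.eq_of_walk {c d w : V} (hc : TIsLeaf T c) (hcw : T.Adj c w) (p : T.Walk c d)
    (hp : w ∉ p.support) : d = c := by
  cases p with
  | nil => rfl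
  | cons h q =>
    obtain rfl := hc.unique h hcw
    exact absurd q.start_mem_support (fun h' => hp (List.mem_cons_of_mem _ h'))

theorem exists_adj_not_tIsLeaf (hT : T.Connected) {w : V} (hw : ¬ TIsLeaf T w)
    (x₀ : {v : V // TIsLeaf T v})
    (havoid : ∀ x y : {v : V // TIsLeaf T v}, ∃ p : T.Walk x.1 y.1, w ∉ p.support) :
    ∃ d, T.Adj w d ∧ ¬ TIsLeaf T d := by
  obtain ⟨c, hwc⟩ : ∃ c, T.Adj w c := by
    obtain ⟨p⟩ := hT.preconnected w x₀.1
    cases p with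
    | nil => exact absurd x₀.2 hw
    | cons h _ => exact ⟨_, h⟩
  obtain ⟨d, hwd, hdc⟩ : ∃ d, T.Adj w d ∧ d ≠ c := by
    by_contra! h
    exact hw ⟨c, hwc, h⟩
  by_contra! hleaf
  obtain ⟨p, hp⟩ := havoid ⟨c, hleaf c hwc⟩ ⟨d, hleaf d hwd⟩
  exact hdc ((hleaf c hwc).eq_of_walk hwc.symm p hp)

theorem exists_walk_notMem_support_of_label_eq_true {ℓ : Sym2 V → Bool}
    {G : SimpleGraph {v : V // TIsLeaf T v}} (hG : ∀ x y, G.Adj x y → Rel1 T ℓ x.1 y.1)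
    (hconn : G.Preconnected) {w : V} (hw : ¬ TIsLeaf T w)
    (hone : ∀ a, T.Adj w a → ℓ s(w, a) = true) (x y : {v : V // TIsLeaf T v}) :
    ∃ p : T.Walk x.1 y.1, w ∉ p.support := by
  have hne (z : {v : V // TIsLeaf T v}) : z.1 ≠ w := fun h => hw (h ▸ z.2)
  refine (hconn x y).exists_walk_notMem_support hne fun x y hxy => ?_
  obtain ⟨p, -, hp⟩ := hG x y hxy
  exact ⟨p, p.notMem_support_of_length_filter_edges_eq_one hone (hne x) (hne y) hp⟩

theorem rel0_of_adj_of_adj {ℓ : Sym2 V → Bool} {w a b : V} (hwa : T.Adj w a) (hwb : T.Adj w b)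
    (hab : a ≠ b) (ha : ℓ s(w, a) = false) (hb : ℓ s(w, b) = false) : Rel0 T ℓ a b :=
  ⟨.cons hwa.symm (.cons hwb .nil), by simp [Walk.isPath_def, hab, hwa.ne', hwb.ne],
    by simp [Sym2.eq_swap, ha, hb]⟩

end Leaves

theorem least_resolved_structure_general
    {V : Type*} (T : SimpleGraph V) (hT : T.IsTree) (ℓ : Sym2 V → Bool)
    (G : SimpleGraph {v : V // TIsLeaf T v})
    (hexpl : ∀ x y : {v : V // TIsLeaf T v},
      G.Adj x y ↔ (x ≠ y ∧ Rel1 T ℓ x.1 y.1))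
    (hdisc : ∀ x y : V, TIsLeaf T x → TIsLeaf T y → Rel0 T ℓ x y → x = y)
    (hconn : G.Connected)
    -- least resolved: no contraction of an interior edge yields a tree explaining G
    (hleast : ∀ u v : V, T.Adj u v → ¬ TIsLeaf T u → ¬ TIsLeaf T v →
      ∀ (T' : SimpleGraph {w : V // w ≠ v}),
        (∀ a b : {w : V // w ≠ v}, T'.Adj a b ↔
          (T.Adj a.1 b.1 ∨ (a.1 = u ∧ T.Adj v b.1 ∧ b.1 ≠ u) ∨
            (b.1 = u ∧ T.Adj v a.1 ∧ a.1 ≠ u))) →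
        ∀ ℓ' : Sym2 {w : V // w ≠ v} → Bool,
          (∀ a b : {w : V // w ≠ v}, T.Adj a.1 b.1 → ℓ' s(a, b) = ℓ s(a.1, b.1)) →
          (∀ a b : {w : V // w ≠ v}, a.1 = u → ¬ T.Adj a.1 b.1 → T.Adj v b.1 →
            ℓ' s(a, b) = ℓ s(v, b.1)) →
          ¬ (∀ (x y : {v' : V // TIsLeaf T v'}) (hx : x.1 ≠ v) (hy : y.1 ≠ v),
              G.Adj x y ↔ (x ≠ y ∧ Rel1 T' ℓ' ⟨x.1, hx⟩ ⟨y.1, hy⟩))) :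
    (∀ a b : V, T.Adj a b → ℓ s(a, b) = false → TIsLeaf T a ∨ TIsLeaf T b) ∧
    (∀ w : V, ¬ TIsLeaf T w → ∃! a : V, T.Adj w a ∧ ℓ s(w, a) = false) := by
  classical
  have contract : ∀ u v, T.Adj u v → ¬ TIsLeaf T u → ¬ TIsLeaf T v →
      (∀ x y : {v : V // TIsLeaf T v}, ∃ p : T.Walk x.1 y.1,
        p.IsPath ∧ (ℓ s(u, v) = false ∨ s(u, v) ∉ p.edges)) → False := by
    intro u v huv hu hv H
    refine hleast u v huv hu hv _ (map_contractMap_adj_iff huv.ne) _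
      (fun a b h => contractLabel_of_adj hT.isAcyclic huv ℓ h)
      (fun a b ha _ h => contractLabel_of_eq_of_adj hT.isAcyclic huv ℓ ha h) fun x y hx hy => ?_
    obtain ⟨p, hp, hℓ⟩ := H x y
    rw [hexpl, rel1_map_contractMap_iff hT.isAcyclic huv ℓ hx hy hp hℓ]
  have zero_edge : ∀ a b, T.Adj a b → ℓ s(a, b) = false → TIsLeaf T a ∨ TIsLeaf T b := by
    intro a b hab h₀
    by_contra! h
    exact contract a b hab h.1 h.2 fun x y =>
      have ⟨p, hp, _⟩ := hT.existsUnique_path x.1 y.1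
      ⟨p, hp, .inl h₀⟩
  refine ⟨zero_edge, fun w hw => ?_⟩
  have leaf_of_zero {c : V} (hwc : T.Adj w c) (hc : ℓ s(w, c) = false) : TIsLeaf T c :=
    (zero_edge w c hwc hc).resolve_left hw
  obtain ⟨a, hwa, ha⟩ : ∃ a, T.Adj w a ∧ ℓ s(w, a) = false := by
    by_contra! hone
    have havoid := exists_walk_notMem_support_of_label_eq_true (fun x y h => ((hexpl x y).mp h).2)
      hconn.preconnected hw (by simpa using hone)
    obtain ⟨x₀⟩ := hconn.nonempty
    obtain ⟨d, hwd, hd⟩ := exists_adj_not_tIsLeaf hT.connected hw x₀ havoid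
    refine contract w d hwd hw hd fun x y => ?_
    obtain ⟨p, hp⟩ := havoid x y
    exact ⟨p.bypass, p.bypass_isPath, .inr fun h =>
      hp (p.support_bypass_subset_support (p.bypass.fst_mem_support_of_mem_edges h))⟩
  refine ⟨a, ⟨hwa, ha⟩, fun b ⟨hwb, hb⟩ => ?_⟩
  by_contra hba
  exact hba (hdisc b a (leaf_of_zero hwb hb) (leaf_of_zero hwa ha)
    (rel0_of_adj_of_adj hwb hwa hba hb ha))

/-- In a least resolved tree explaining a connected single-1-relation graph (with
`~0` discrete), every `0`-edge is incident to a leaf, and every inner vertex is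
incident to exactly one `0`-edge. -/
theorem least_resolved_structure
    {V : Type*} (T : SimpleGraph V) (hT : T.IsTree) (ℓ : Sym2 V → Bool)
    (hphylo : ∀ v : V, ¬ (∃ a b : V, a ≠ b ∧ T.Adj v a ∧ T.Adj v b ∧
      ∀ c, T.Adj v c → c = a ∨ c = b))
    (G : SimpleGraph {v : V // TIsLeaf T v})
    (hexpl : ∀ x y : {v : V // TIsLeaf T v},
      G.Adj x y ↔ (x ≠ y ∧ Rel1 T ℓ x.1 y.1))
    (hdisc : ∀ x y : V, TIsLeaf T x → TIsLeaf T y → Rel0 T ℓ x y → x = y)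
    (hconn : G.Connected)
    -- least resolved: no contraction of an interior edge yields a tree explaining G
    (hleast : ∀ u v : V, T.Adj u v → ¬ TIsLeaf T u → ¬ TIsLeaf T v →
      ∀ (T' : SimpleGraph {w : V // w ≠ v}),
        (∀ a b : {w : V // w ≠ v}, T'.Adj a b ↔
          (T.Adj a.1 b.1 ∨ (a.1 = u ∧ T.Adj v b.1 ∧ b.1 ≠ u) ∨
            (b.1 = u ∧ T.Adj v a.1 ∧ a.1 ≠ u))) →
        ∀ ℓ' : Sym2 {w : V // w ≠ v} → Bool,
          (∀ a b : {w : V // w ≠ v}, T.Adj a.1 b.1 → ℓ' s(a, b) = ℓ s(a.1, b.1)) →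
          (∀ a b : {w : V // w ≠ v}, a.1 = u → ¬ T.Adj a.1 b.1 → T.Adj v b.1 →
            ℓ' s(a, b) = ℓ s(v, b.1)) →
          ¬ (∀ (x y : {v' : V // TIsLeaf T v'}) (hx : x.1 ≠ v) (hy : y.1 ≠ v),
              G.Adj x y ↔ (x ≠ y ∧ Rel1 T' ℓ' ⟨x.1, hx⟩ ⟨y.1, hy⟩))) :
    (∀ a b : V, T.Adj a b → ℓ s(a, b) = false → TIsLeaf T a ∨ TIsLeaf T b) ∧
    (∀ w : V, ¬ TIsLeaf T w → ∃! a : V, T.Adj w a ∧ ℓ s(w, a) = false) :=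
  least_resolved_structure_general T hT ℓ G hexpl hdisc hconn hleast
end

section
/- In a rooted 0/1-edge-labeled tree with discrete ~0, if x ⇀1 y and y ⇀1 z for leaves x, y, z, then any tree explaining these relations displays the rooted triple yz|x; moreover, with u = lca(x,y) = lca(x,z) and v = lca(y,z), the paths P(u,v) and P(v,z) each contain exactly one 1-edge while P(u,x) and P(v,y) contain only 0-edges. -/
open SimpleGraph

/-- `u` is the least common ancestor of `x` and `y` in the tree `T` rooted at `ρ`:
`u` lies on the path from `x` to `y` and on both paths from `x` and from `y` to the
root. -/
def IsLca {V : Type*} (T : SimpleGraph V) (ρ x y u : V) : Prop :=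
  ∀ (p : T.Walk x y) (q : T.Walk x ρ) (r : T.Walk y ρ),
    p.IsPath → q.IsPath → r.IsPath →
    u ∈ p.support ∧ u ∈ q.support ∧ u ∈ r.support

/-- The antisymmetric single-1-relation `x ⇀1 y`: with `u = lca(x,y)`, all edges on
`P(u,x)` are labeled `0` and exactly one edge on `P(u,y)` is labeled `1`. -/
def DRel1 {V : Type*} (T : SimpleGraph V) (ρ : V) (ℓ : Sym2 V → Bool)
    (x y : V) : Prop :=
  ∃ u : V, IsLca T ρ x y u ∧ Rel0 T ℓ u x ∧ Rel1 T ℓ u y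

/-- The rooted triple `ab|c` is displayed: the path from `a` to `b` does not
intersect the path from `c` to the root `ρ`. -/
def DisplaysTriple {V : Type*} (T : SimpleGraph V) (ρ a b c : V) : Prop :=
  ∀ (p : T.Walk a b) (q : T.Walk c ρ), p.IsPath → q.IsPath →
    ∀ w ∈ p.support, w ∉ q.support

/-! In a tree a vertex lies on the path from `a` to `c` exactly when it is metrically between
them, so the combinatorics of the four paths reduces to arithmetic on distances. The labels
place `u` strictly above `v` on the path from `y` to the root: were `u` on the all-`0` path
from `v` to `y`, the `1`-edge of `P(u, y)` would lie on it. Hence `x - u - v - z` and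
`y - v - u - ρ` are geodesic chains, which yields `lca(x, z) = u`, the label counts, and the
disjointness of `P(y, z)` from `P(x, ρ)`. -/

namespace SimpleGraph

variable {V : Type*} {G T : SimpleGraph V} {a b c d w x y z u v ρ : V}

def Between (G : SimpleGraph V) (a b c : V) : Prop :=
  G.dist a b + G.dist b c = G.dist a c

theorem Between.symm (h : G.Between a b c) : G.Between c b a := by
  have := G.dist_comm (u := a) (v := b)
  have := G.dist_comm (u := b) (v := c)
  have := G.dist_comm (u := a) (v := c)
  unfold Between at *
  omega

theorem between_self_left : G.Between a a c := by
  simp [Between]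

theorem Connected.between_trans_right (hG : G.Connected) (h₁ : G.Between w x z)
    (h₂ : G.Between x y z) : G.Between w y z := by
  have := hG.dist_triangle (u := w) (v := x) (w := y)
  have := hG.dist_triangle (u := w) (v := y) (w := z)
  unfold Between at *
  omega

theorem Connected.between_trans_right_left (hG : G.Connected) (h₁ : G.Between w x z)
    (h₂ : G.Between x y z) : G.Between w x y := by
  have := hG.dist_triangle (u := w) (v := x) (w := y)
  have := hG.dist_triangle (u := w) (v := y) (w := z)
  unfold Between at *
  omega

theorem Connected.not_between_of_between (hG : G.Connected) (h₁ : G.Between a b c)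
    (h₂ : G.Between b c d) (hbc : b ≠ c) (hw : G.Between a w b) : ¬ G.Between c w d := by
  intro hw'
  have := hG.dist_triangle (u := a) (v := w) (w := c)
  have := hG.dist_triangle (u := b) (v := w) (w := d)
  have := G.dist_comm (u := w) (v := b)
  have := G.dist_comm (u := w) (v := c)
  have := hG.dist_eq_zero_iff.not.mpr hbc
  unfold Between at *
  omega

namespace IsTree

variable (hT : T.IsTree)
include hT

theorem length_eq_dist {p : T.Walk a b} (hp : p.IsPath) : p.length = T.dist a b := by
  obtain ⟨q, hq, hqd⟩ := hT.connected.exists_path_of_dist a b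
  rw [(hT.existsUnique_path a b).unique hp hq, hqd]

theorem mem_support_iff_between {p : T.Walk a c} (hp : p.IsPath) :
    b ∈ p.support ↔ T.Between a b c := by
  classical
  constructor
  · intro hb
    have hlen := congrArg Walk.length (p.take_spec hb)
    rwa [Walk.length_append, hT.length_eq_dist (hp.takeUntil hb),
      hT.length_eq_dist (hp.dropUntil hb), hT.length_eq_dist hp] at hlen
  · intro h
    obtain ⟨q, hq⟩ := hT.connected.exists_walk_length_eq_dist a b
    obtain ⟨r, hr⟩ := hT.connected.exists_walk_length_eq_dist b c
    have hqr : (q.append r).IsPath :=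
      (q.append r).isPath_of_length_eq_dist (by rw [Walk.length_append, hq, hr, h])
    rw [(hT.existsUnique_path a c).unique hp hqr]
    exact (Walk.mem_support_append_iff _ _).mpr (Or.inl q.end_mem_support)

theorem eq_append_of_between {p : T.Walk a c} {q : T.Walk a b} {r : T.Walk b c}
    (hp : p.IsPath) (hq : q.IsPath) (hr : r.IsPath) (h : T.Between a b c) : p = q.append r := by
  classical
  have hb := (hT.mem_support_iff_between hp).mpr h
  calc p = (p.takeUntil b hb).append (p.dropUntil b hb) := (p.take_spec hb).symm
    _ = q.append r := by
      rw [(hT.existsUnique_path a b).unique (hp.takeUntil hb) hq,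
        (hT.existsUnique_path b c).unique (hp.dropUntil hb) hr]

/-- The path from `a` to `c` is contained in the union of the paths from `a` to `b` and from
`b` to `c`. -/
theorem between_or_between (h : T.Between a w c) (b : V) :
    T.Between a w b ∨ T.Between b w c := by
  classical
  obtain ⟨q, hq⟩ := (hT.existsUnique_path a b).exists
  obtain ⟨r, hr⟩ := (hT.existsUnique_path b c).exists
  have hw : w ∈ (q.append r).support := (q.append r).support_bypass_subset_support
    ((hT.mem_support_iff_between (q.append r).bypass_isPath).mpr h)
  rcases (Walk.mem_support_append_iff _ _).mp hw with hw | hw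
  · exact Or.inl ((hT.mem_support_iff_between hq).mp hw)
  · exact Or.inr ((hT.mem_support_iff_between hr).mp hw)

theorem between_trans_of_ne (h₁ : T.Between a b c) (h₂ : T.Between b c d) (hbc : b ≠ c) :
    T.Between a b d := by
  have := hT.connected.dist_eq_zero_iff.not.mpr hbc
  have := T.dist_comm (u := a) (v := b)
  have := T.dist_comm (u := a) (v := c)
  rcases hT.between_or_between h₂ a with h | h <;> unfold Between at * <;> omega

theorem isLca_iff : IsLca T ρ x y u ↔
    T.Between x u y ∧ T.Between x u ρ ∧ T.Between y u ρ := by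
  obtain ⟨p, hp⟩ := (hT.existsUnique_path x y).exists
  obtain ⟨q, hq⟩ := (hT.existsUnique_path x ρ).exists
  obtain ⟨r, hr⟩ := (hT.existsUnique_path y ρ).exists
  constructor
  · intro h
    obtain ⟨hup, huq, hur⟩ := h p q r hp hq hr
    exact ⟨(hT.mem_support_iff_between hp).mp hup, (hT.mem_support_iff_between hq).mp huq,
      (hT.mem_support_iff_between hr).mp hur⟩
  · rintro ⟨hxy, hxρ, hyρ⟩ p q r hp hq hr
    exact ⟨(hT.mem_support_iff_between hp).mpr hxy, (hT.mem_support_iff_between hq).mpr hxρ,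
      (hT.mem_support_iff_between hr).mpr hyρ⟩

theorem displaysTriple_iff : DisplaysTriple T ρ a b c ↔
    ∀ w, T.Between a w b → ¬ T.Between c w ρ := by
  obtain ⟨p, hp⟩ := (hT.existsUnique_path a b).exists
  obtain ⟨q, hq⟩ := (hT.existsUnique_path c ρ).exists
  constructor
  · intro h w hab hcρ
    exact h p q hp hq w ((hT.mem_support_iff_between hp).mpr hab)
      ((hT.mem_support_iff_between hq).mpr hcρ)
  · intro h p q hp hq w hwp hwq
    exact h w ((hT.mem_support_iff_between hp).mp hwp) ((hT.mem_support_iff_between hq).mp hwq)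

variable {ℓ : Sym2 V → Bool}

theorem not_between_of_rel0_of_rel1 (h0 : Rel0 T ℓ v y) (h1 : Rel1 T ℓ u y) :
    ¬ T.Between v u y := by
  intro h
  obtain ⟨p, hp, hp0⟩ := h0
  obtain ⟨r, hr, hr1⟩ := h1
  obtain ⟨q, hq⟩ := (hT.existsUnique_path v u).exists
  obtain ⟨e, he⟩ := List.length_pos_iff_exists_mem.mp (by omega : 0 < (r.edges.filter ℓ).length)
  rw [List.mem_filter] at he
  have hep : e ∈ p.edges := by
    rw [hT.eq_append_of_between hp hq hr h, Walk.edges_append]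
    exact List.mem_append_right _ he.1
  simp [hp0 e hep] at he

theorem rel1_of_between (h : T.Between u v y) (h1 : Rel1 T ℓ u y) (h0 : Rel0 T ℓ v y) :
    Rel1 T ℓ u v := by
  obtain ⟨p, hp, hp1⟩ := h1
  obtain ⟨r, hr, hr0⟩ := h0
  obtain ⟨q, hq⟩ := (hT.existsUnique_path u v).exists
  have hr0' : r.edges.filter ℓ = [] := List.filter_eq_nil_iff.mpr (by simpa using hr0)
  refine ⟨q, hq, ?_⟩
  rwa [hT.eq_append_of_between hp hq hr h, Walk.edges_append, List.filter_append, hr0',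
    List.append_nil] at hp1

end IsTree

end SimpleGraph

theorem case_i_structure_general {V : Type*} (T : SimpleGraph V) (hT : T.IsTree) (ρ : V)
    (ℓ : Sym2 V → Bool) (x y z : V)
    (hxy : DRel1 T ρ ℓ x y) (hyz : DRel1 T ρ ℓ y z) :
    DisplaysTriple T ρ y z x ∧
    ∃ u v : V, IsLca T ρ x y u ∧ IsLca T ρ x z u ∧ IsLca T ρ y z v ∧ u ≠ v ∧
      Rel1 T ℓ u v ∧ Rel1 T ℓ v z ∧ Rel0 T ℓ u x ∧ Rel0 T ℓ v y := by
  obtain ⟨u, hu, hux, huy⟩ := hxy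
  obtain ⟨v, hv, hvy, hvz⟩ := hyz
  have hG := hT.connected
  obtain ⟨hxuy, hxuρ, hyuρ⟩ := hT.isLca_iff.mp hu
  obtain ⟨-, hyvρ, hzvρ⟩ := hT.isLca_iff.mp hv
  have hvuy : ¬ T.Between v u y := hT.not_between_of_rel0_of_rel1 hvy huy
  have huv : u ≠ v := by
    rintro rfl
    exact hvuy between_self_left
  have hvuρ : T.Between v u ρ := (hT.between_or_between hyuρ v).resolve_left (hvuy ∘ .symm)
  have huvy : T.Between u v y := (hG.between_trans_right_left hyvρ hvuρ).symm
  have hxuv : T.Between x u v := hG.between_trans_right_left hxuy huvy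
  have hzvu : T.Between z v u := hG.between_trans_right_left hzvρ hvuρ
  have hxuz : T.Between x u z := hT.between_trans_of_ne hxuv hzvu.symm huv
  refine ⟨?_, u, v, hu, hT.isLca_iff.mpr ⟨hxuz, hxuρ, hG.between_trans_right hzvρ hvuρ⟩,
    hv, huv, hT.rel1_of_between huvy huy hvy, hvz, hux, hvy⟩
  rw [hT.displaysTriple_iff]
  intro w hwyz hwxρ
  rcases hT.between_or_between hwyz v with hw | hw <;>
    rcases hT.between_or_between hwxρ u with hw' | hw'
  · exact hG.not_between_of_between hxuv huvy huv hw' hw.symm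
  · exact hG.not_between_of_between huvy.symm hvuρ huv.symm hw hw'
  · exact hG.not_between_of_between hxuv hzvu.symm huv hw' hw
  · exact hG.not_between_of_between hzvu hvuρ huv.symm hw.symm hw'

/-- If `x ⇀1 y` and `y ⇀1 z` in a rooted edge-labeled tree with discrete `~0`, then
the tree displays the rooted triple `yz|x`; moreover, with `u = lca(x,y) = lca(x,z)`
and `v = lca(y,z)`, the paths `P(u,v)` and `P(v,z)` each contain exactly one `1`-edge
while `P(u,x)` and `P(v,y)` contain only `0`-edges. -/
theorem case_i_structure {V : Type*} (T : SimpleGraph V) (hT : T.IsTree) (ρ : V)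
    (ℓ : Sym2 V → Bool) (x y z : V)
    (hx : TIsLeaf T x) (hy : TIsLeaf T y) (hz : TIsLeaf T z)
    (hdisc : ∀ a b : V, TIsLeaf T a → TIsLeaf T b → Rel0 T ℓ a b → a = b)
    (hxy : DRel1 T ρ ℓ x y) (hyz : DRel1 T ρ ℓ y z) :
    DisplaysTriple T ρ y z x ∧
    ∃ u v : V, IsLca T ρ x y u ∧ IsLca T ρ x z u ∧ IsLca T ρ y z v ∧ u ≠ v ∧
      Rel1 T ℓ u v ∧ Rel1 T ℓ v z ∧ Rel0 T ℓ u x ∧ Rel0 T ℓ v y :=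
  case_i_structure_general T hT ρ ℓ x y z hxy hyz
end

section
/- Let T be a rooted 0/1-edge-labeled tree with discrete ~0 and leaves x, y, z. If x ⇀1 y and y ⇀1 z then x ~1 z fails and x ~0 z fails; in fact the path from x to z contains exactly two edges labeled 1. -/
open SimpleGraph

/-! The number of `1`-edges on the path to the root increases by one from `x` to `y` and from `y`
to `z`. In a tree a path carries no more `1`-edges than any walk with the same ends, so the path
from `x` to `z` carries at least two of them (compare the path from `z` to the root with the detour
through `x`) and at most two (compare it with the detour through `y`, which carries one on each
half). -/

namespace SimpleGraph

variable {V : Type*} {G : SimpleGraph V}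

lemma IsAcyclic.eq_of_isPath (hG : G.IsAcyclic) {a b : V} {p q : G.Walk a b}
    (hp : p.IsPath) (hq : q.IsPath) : p = q :=
  congrArg Subtype.val ((hG.subsingleton_path a b).elim ⟨p, hp⟩ ⟨q, hq⟩)

namespace Walk

def labelCount (ℓ : Sym2 V → Bool) {a b : V} (p : G.Walk a b) : ℕ := (p.edges.filter ℓ).length

variable {ℓ : Sym2 V → Bool} {a b c : V}

@[simp]
lemma labelCount_append (p : G.Walk a b) (q : G.Walk b c) :
    (p.append q).labelCount ℓ = p.labelCount ℓ + q.labelCount ℓ := by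
  simp [labelCount, edges_append, List.filter_append]

@[simp]
lemma labelCount_reverse (p : G.Walk a b) : p.reverse.labelCount ℓ = p.labelCount ℓ := by
  simp [labelCount, edges_reverse, List.filter_reverse]

lemma labelCount_eq_zero_iff (p : G.Walk a b) :
    p.labelCount ℓ = 0 ↔ ∀ e ∈ p.edges, ℓ e = false := by
  simp [labelCount, List.filter_eq_nil_iff]

lemma labelCount_takeUntil_add_dropUntil [DecidableEq V] (p : G.Walk a b) (h : c ∈ p.support) :
    (p.takeUntil c h).labelCount ℓ + (p.dropUntil c h).labelCount ℓ = p.labelCount ℓ := by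
  rw [← labelCount_append, take_spec]

/-- In a forest the path is the bypass of any walk with the same ends. -/
lemma IsPath.labelCount_le (hG : G.IsAcyclic) {p : G.Walk a b} (hp : p.IsPath)
    (w : G.Walk a b) : p.labelCount ℓ ≤ w.labelCount ℓ := by
  classical
  rw [hG.eq_of_isPath hp w.bypass_isPath]
  exact (w.edges_bypass_sublist_edges.filter ℓ).length_le

end Walk

end SimpleGraph

open SimpleGraph Walk

section

variable {V : Type*} {T : SimpleGraph V} {ρ : V} {ℓ : Sym2 V → Bool} {x y : V}

lemma Rel0.labelCount_eq_zero (hT : T.IsAcyclic) (h : Rel0 T ℓ x y) {p : T.Walk x y}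
    (hp : p.IsPath) : p.labelCount ℓ = 0 := by
  obtain ⟨q, hq, hq0⟩ := h
  rw [hT.eq_of_isPath hp hq, labelCount_eq_zero_iff]
  exact hq0

lemma Rel1.labelCount_eq_one (hT : T.IsAcyclic) (h : Rel1 T ℓ x y) {p : T.Walk x y}
    (hp : p.IsPath) : p.labelCount ℓ = 1 := by
  obtain ⟨q, hq, hq1⟩ := h
  rw [hT.eq_of_isPath hp hq]
  exact hq1

lemma DRel1.labelCount_eq_one (hT : T.IsTree) (h : DRel1 T ρ ℓ x y) {p : T.Walk x y}
    (hp : p.IsPath) : p.labelCount ℓ = 1 := by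
  classical
  obtain ⟨u, hu, hux, huy⟩ := h
  obtain ⟨q, hq⟩ := (hT.existsUnique_path x ρ).exists
  obtain ⟨r, hr⟩ := (hT.existsUnique_path y ρ).exists
  have hup : u ∈ p.support := (hu p q r hp hq hr).1
  have hxu : (p.takeUntil u hup).labelCount ℓ = 0 := by
    rw [← labelCount_reverse]
    exact hux.labelCount_eq_zero hT.isAcyclic (hp.takeUntil hup).reverse
  have huy' : (p.dropUntil u hup).labelCount ℓ = 1 :=
    huy.labelCount_eq_one hT.isAcyclic (hp.dropUntil hup)
  rw [← labelCount_takeUntil_add_dropUntil p hup, hxu, huy']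

/-- Both paths to `ρ` pass through the lca `u` and share their part from `u` on. -/
lemma DRel1.labelCount_root_eq_succ (hT : T.IsTree) (h : DRel1 T ρ ℓ x y) {q : T.Walk x ρ}
    {r : T.Walk y ρ} (hq : q.IsPath) (hr : r.IsPath) :
    r.labelCount ℓ = q.labelCount ℓ + 1 := by
  classical
  obtain ⟨u, hu, hux, huy⟩ := h
  obtain ⟨p, hp⟩ := (hT.existsUnique_path x y).exists
  obtain ⟨-, huq, hur⟩ := hu p q r hp hq hr
  have hxu : (q.takeUntil u huq).labelCount ℓ = 0 := by
    rw [← labelCount_reverse]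
    exact hux.labelCount_eq_zero hT.isAcyclic (hq.takeUntil huq).reverse
  have hyu : (r.takeUntil u hur).labelCount ℓ = 1 := by
    rw [← labelCount_reverse]
    exact huy.labelCount_eq_one hT.isAcyclic (hr.takeUntil hur).reverse
  have hshared : q.dropUntil u huq = r.dropUntil u hur :=
    hT.isAcyclic.eq_of_isPath (hq.dropUntil huq) (hr.dropUntil hur)
  rw [← labelCount_takeUntil_add_dropUntil q huq, ← labelCount_takeUntil_add_dropUntil r hur,
    hxu, hyu, hshared]
  omega

end

theorem two_one_edges_general {V : Type*} (T : SimpleGraph V) (hT : T.IsTree) (ρ : V)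
    (ℓ : Sym2 V → Bool) (x y z : V)
    (hxy : DRel1 T ρ ℓ x y) (hyz : DRel1 T ρ ℓ y z) :
    ¬ Rel1 T ℓ x z ∧ ¬ Rel0 T ℓ x z ∧
      ∃ p : T.Walk x z, p.IsPath ∧ (p.edges.filter ℓ).length = 2 := by
  have path (a b : V) : ∃ p : T.Walk a b, p.IsPath := (hT.existsUnique_path a b).exists
  obtain ⟨qx, hqx⟩ := path x ρ
  obtain ⟨qy, hqy⟩ := path y ρ
  obtain ⟨qz, hqz⟩ := path z ρ
  obtain ⟨pxy, hpxy⟩ := path x y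
  obtain ⟨pyz, hpyz⟩ := path y z
  obtain ⟨pxz, hpxz⟩ := path x z
  have hdy := hxy.labelCount_root_eq_succ hT hqx hqy
  have hdz := hyz.labelCount_root_eq_succ hT hqy hqz
  have hle := hpxz.labelCount_le (ℓ := ℓ) hT.isAcyclic (pxy.append pyz)
  have hge := hqz.labelCount_le (ℓ := ℓ) hT.isAcyclic (pxz.reverse.append qx)
  rw [labelCount_append, hxy.labelCount_eq_one hT hpxy, hyz.labelCount_eq_one hT hpyz] at hle
  rw [labelCount_append, labelCount_reverse] at hge
  have htwo : pxz.labelCount ℓ = 2 := by omega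
  refine ⟨fun h1 => ?_, fun h0 => ?_, pxz, hpxz, htwo⟩
  · have := h1.labelCount_eq_one hT.isAcyclic hpxz
    omega
  · have := h0.labelCount_eq_zero hT.isAcyclic hpxz
    omega

/-- If `x ⇀1 y` and `y ⇀1 z` in a rooted 0/1-edge-labeled tree with discrete `~0`,
then neither `x ~1 z` nor `x ~0 z` holds; in fact the path from `x` to `z` contains
exactly two edges labeled `1`. -/
theorem two_one_edges {V : Type*} (T : SimpleGraph V) (hT : T.IsTree) (ρ : V)
    (ℓ : Sym2 V → Bool) (x y z : V)
    (hx : TIsLeaf T x) (hy : TIsLeaf T y) (hz : TIsLeaf T z)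
    (hdisc : ∀ a b : V, TIsLeaf T a → TIsLeaf T b → Rel0 T ℓ a b → a = b)
    (hxy : DRel1 T ρ ℓ x y) (hyz : DRel1 T ρ ℓ y z) :
    ¬ Rel1 T ℓ x z ∧ ¬ Rel0 T ℓ x z ∧
      ∃ p : T.Walk x z, p.IsPath ∧ (p.edges.filter ℓ).length = 2 :=
  two_one_edges_general T hT ρ ℓ x y z hxy hyz
end

section
/- In a connected directed graph Q whose underlying graph is a tree, a vertex v admits an orientation-compatible rooting (i.e., all edges incident to v point away from v and more generally every edge can be kept pointing away from v after deleting, for each symmetric pair, one direction) if and only if v is a central vertex: for every directed edge xy of Q, either xy or yx points away from v, where a directed edge xy points away from v iff the undirected path from v to x does not contain y. -/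
open SimpleGraph

/-! If `v` is central, keep exactly the edges of `D` that point away from `v`. This is a
rooting because two opposite edges `x y`, `y x` never both point away from `v`: the path
from `v` to `x` avoids `y`, so extending it by the edge `x y` gives a path from `v` to `y`
through `x`. -/

/-- In a directed graph `D` whose underlying undirected graph is a tree, the directed
edge `x y` points away from `v` if the unique undirected path from `v` to `x` avoids
`y`. -/
def PointsAwayFrom {V : Type*} (D : V → V → Prop) (v x y : V) : Prop :=
  ∀ p : (SimpleGraph.fromRel D).Walk v x, p.IsPath → y ∉ p.support

/-- `v` is a central vertex of the directed graph `D`: for every directed edge `x y`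
of `D`, either `x y` points away from `v`, or the reverse edge `y x` is present in
`D` and points away from `v`. -/
def CentralVertex {V : Type*} (D : V → V → Prop) (v : V) : Prop :=
  ∀ x y : V, D x y →
    (PointsAwayFrom D v x y ∨ (D y x ∧ PointsAwayFrom D v y x))

section

variable {V : Type*} {D : V → V → Prop} {v x y : V}

theorem PointsAwayFrom.ne (hconn : (fromRel D).Preconnected)
    (h : PointsAwayFrom D v x y) : x ≠ y := by
  rintro rfl
  obtain ⟨p, hp⟩ := hconn.exists_isPath v x
  exact h p hp p.end_mem_support

theorem PointsAwayFrom.not_reverse (hconn : (fromRel D).Preconnected) (hxy : D x y)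
    (h : PointsAwayFrom D v x y) : ¬ PointsAwayFrom D v y x := by
  intro h'
  have hadj : (fromRel D).Adj x y := (fromRel_adj D x y).mpr ⟨h.ne hconn, Or.inl hxy⟩
  obtain ⟨p, hp⟩ := hconn.exists_isPath v x
  refine h' (p.concat hadj) (hp.concat (h p hp) hadj) ?_
  rw [p.support_concat hadj]
  exact List.mem_append_left _ p.end_mem_support

theorem centralVertex_of_rooting {D' : V → V → Prop} (hsub : ∀ x y, D' x y → D x y)
    (hcov : ∀ x y, D x y → D' x y ∨ D' y x) (haway : ∀ x y, D' x y → PointsAwayFrom D v x y) :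
    CentralVertex D v := by
  intro x y hxy
  rcases hcov x y hxy with h | h
  · exact Or.inl (haway x y h)
  · exact Or.inr ⟨hsub y x h, haway y x h⟩

theorem CentralVertex.exists_rooting (hconn : (fromRel D).Preconnected)
    (hc : CentralVertex D v) :
    ∃ D' : V → V → Prop,
      (∀ x y : V, D' x y → D x y) ∧
      (∀ x y : V, D x y → (D' x y ∨ D' y x)) ∧
      (∀ x y : V, D' x y → ¬ D' y x) ∧
      (∀ x y : V, D' x y → PointsAwayFrom D v x y) := by
  refine ⟨fun x y => D x y ∧ PointsAwayFrom D v x y, fun x y h => h.1, ?_,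
    fun x y h h' => h.2.not_reverse hconn h.1 h'.2, fun x y h => h.2⟩
  intro x y hxy
  rcases hc x y hxy with h | h
  · exact Or.inl ⟨hxy, h⟩
  · exact Or.inr h

end

/-- In a connected directed graph `Q` (given by `D`, possibly containing both
directions of some edges) whose underlying graph is a tree, a vertex `v` admits an
orientation-compatible rooting — i.e. one can delete, for each symmetric pair, one of
the two directions so that every remaining directed edge points away from `v` — if
and only if `v` is a central vertex. -/
theorem rooting_iff_central {V : Type*} (D : V → V → Prop)
    (htree : (SimpleGraph.fromRel D).IsTree) (v : V) :
    (∃ D' : V → V → Prop,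
      (∀ x y : V, D' x y → D x y) ∧
      (∀ x y : V, D x y → (D' x y ∨ D' y x)) ∧
      (∀ x y : V, D' x y → ¬ D' y x) ∧
      (∀ x y : V, D' x y → PointsAwayFrom D v x y)) ↔
    CentralVertex D v :=
  ⟨fun ⟨_, hsub, hcov, _, haway⟩ => centralVertex_of_rooting hsub hcov haway,
    CentralVertex.exists_rooting htree.connected.preconnected⟩
end

section
/- If a set R of rooted triples contains (ab|c) and (ad|b), then any rooted tree displaying all triples of R also displays (bd|c) and (ad|c). -/
/-!
In a tree, a path from `x` to `z` runs inside the union of the paths `x–y` and `y–z`; this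
alone gives `(ab|c), (ad|c) ⊢ (bd|c)`. For `(ad|c)`, suppose a vertex `w` lies on the path
`a–d` and on the path `c–ρ`, and let `m` be the median of `b`, `w`, `ρ`. As `m` lies on the
path `b–w`, it lies on the path `a–b` or on the path `a–w` ⊆ `a–d`. The first is excluded by
`(ab|c)`, since `m` lies on the path `w–ρ` ⊆ `c–ρ`; the second by `(ad|b)`, since `m` lies on
the path `b–ρ`.
-/

open SimpleGraph

namespace SimpleGraph

variable {V : Type*} {G : SimpleGraph V} {u v w x : V}

theorem IsAcyclic.support_subset_of_isPath (hG : G.IsAcyclic) {p : G.Walk u v}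
    (hp : p.IsPath) (q : G.Walk u v) : p.support ⊆ q.support := by
  classical
  have hpq : p = q.bypass :=
    congrArg Subtype.val ((hG.subsingleton_path u v).elim ⟨p, hp⟩ ⟨q.bypass, q.bypass_isPath⟩)
  exact hpq ▸ q.support_bypass_subset_support

theorem IsAcyclic.mem_support_append_of_isPath (hG : G.IsAcyclic) {p : G.Walk u w}
    (hp : p.IsPath) (q : G.Walk u v) (r : G.Walk v w) (hx : x ∈ p.support) :
    x ∈ q.support ∨ x ∈ r.support :=
  (Walk.mem_support_append_iff q r).1 (hG.support_subset_of_isPath hp _ hx)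

namespace Walk

theorem IsPath.append {p : G.Walk u v} {q : G.Walk v w} (hp : p.IsPath) (hq : q.IsPath)
    (h : ∀ x ∈ p.support, x ∈ q.support → x = v) : (p.append q).IsPath := by
  rw [isPath_def, support_append]
  have hq' : (v :: q.support.tail).Nodup := q.cons_tail_support ▸ hq.support_nodup
  refine hp.support_nodup.append (List.nodup_cons.1 hq').2 fun x hxp hxq => ?_
  obtain rfl := h x hxp (List.mem_of_mem_tail hxq)
  exact (List.nodup_cons.1 hq').1 hxq

/-- Take for `m` the first vertex of `q` on `p`: the parts of `p` and `q` before `m` meet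
only in `m`. -/
theorem exists_mem_support_isPath (p : G.Walk u x) (q : G.Walk v x) :
    ∃ m ∈ p.support, m ∈ q.support ∧ ∃ r : G.Walk u v, r.IsPath ∧ m ∈ r.support := by
  classical
  obtain ⟨m, hmp, hmq, hfirst⟩ := q.exists_mem_support_forall_mem_support_imp_eq
    p.support.toFinset ⟨x, by simp⟩
  rw [List.mem_toFinset] at hmp
  let p₁ := p.takeUntil m hmp
  let q₁ := q.takeUntil m hmq
  refine ⟨m, hmp, hmq, p₁.bypass.append q₁.bypass.reverse, ?_, by simp⟩
  refine p₁.bypass_isPath.append q₁.bypass_isPath.reverse fun y hyp hyq => ?_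
  rw [support_reverse, List.mem_reverse] at hyq
  refine hfirst y ?_ (support_bypass_subset_support _ hyq)
  exact List.mem_toFinset.2
    (support_takeUntil_subset_support p hmp (support_bypass_subset_support _ hyp))

end Walk

end SimpleGraph

section DisplaysTriple

variable {V : Type*} {T : SimpleGraph V} {ρ a b c d : V}

theorem DisplaysTriple.symm (h : DisplaysTriple T ρ a b c) : DisplaysTriple T ρ b a c :=
  fun p q hp hq w hw => h p.reverse q hp.reverse hq w (by simpa using hw)

theorem DisplaysTriple.trans (hT : T.IsTree) (hab : DisplaysTriple T ρ a b c)
    (hbd : DisplaysTriple T ρ b d c) : DisplaysTriple T ρ a d c := by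
  intro p q hp hq w hwp hwq
  obtain ⟨pab, hpab, -⟩ := hT.existsUnique_path a b
  obtain ⟨pbd, hpbd, -⟩ := hT.existsUnique_path b d
  rcases hT.isAcyclic.mem_support_append_of_isPath hp pab pbd hwp with hw | hw
  · exact hab pab q hpab hq w hw hwq
  · exact hbd pbd q hpbd hq w hw hwq

theorem DisplaysTriple.change_outgroup (hT : T.IsTree) (habc : DisplaysTriple T ρ a b c)
    (hadb : DisplaysTriple T ρ a d b) : DisplaysTriple T ρ a d c := by
  classical
  intro p q hp hq w hwp hwq
  obtain ⟨pab, hpab, -⟩ := hT.existsUnique_path a b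
  obtain ⟨pbρ, hpbρ, -⟩ := hT.existsUnique_path b ρ
  obtain ⟨m, hmb, hmw, r, hr, hmr⟩ := pbρ.exists_mem_support_isPath (q.dropUntil w hwq)
  have hmq : m ∈ q.support := q.support_dropUntil_subset_support hwq hmw
  rcases hT.isAcyclic.mem_support_append_of_isPath hr pab.reverse (p.takeUntil w hwp) hmr
    with hma | hma
  · exact habc pab q hpab hq m (by simpa using hma) hmq
  · exact hadb p pbρ hp hpbρ m (p.support_takeUntil_subset_support hwp hma) hmb

end DisplaysTriple

theorem triple_inference_general {V : Type*} (T : SimpleGraph V) (hT : T.IsTree) (ρ : V)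
    (a b c d : V)
    (h1 : DisplaysTriple T ρ a b c) (h2 : DisplaysTriple T ρ a d b) :
    DisplaysTriple T ρ b d c ∧ DisplaysTriple T ρ a d c := by
  have hadc := h1.change_outgroup hT h2
  exact ⟨h1.symm.trans hT hadc, hadc⟩

/-- Triple inference rule: every rooted tree displaying the triples `(ab|c)` and
`(ad|b)` also displays `(bd|c)` and `(ad|c)`. Hence if a set `R` of triples contains
`(ab|c)` and `(ad|b)`, then `R ⊢ (bd|c)` and `R ⊢ (ad|c)`. -/
theorem triple_inference {V : Type*} (T : SimpleGraph V) (hT : T.IsTree) (ρ : V)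
    (a b c d : V)
    (ha : TIsLeaf T a) (hb : TIsLeaf T b) (hc : TIsLeaf T c) (hd : TIsLeaf T d)
    (hab : a ≠ b) (hac : a ≠ c) (had : a ≠ d) (hbc : b ≠ c) (hbd : b ≠ d)
    (hcd : c ≠ d)
    (h1 : DisplaysTriple T ρ a b c) (h2 : DisplaysTriple T ρ a d b) :
    DisplaysTriple T ρ b d c ∧ DisplaysTriple T ρ a d c :=
  triple_inference_general T hT ρ a b c d h1 h2
end
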